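/- arXiv:math/0408310 — 2 statements merged into one kernel-verified Lean document; each statement's English description precedes it below -/
import Mathlib

section
/- Let F be a group with lower central series {F_q}, and for each k ≥ 1 let A_k be the set of automorphisms h of F such that h induces the identity on F/F_{k+1}. Then each A_k is a normal subgroup of the group A_1, and [A_j, A_k] ⊆ A_{j+k} for all j, k ≥ 1. -/
open scoped commutatorElement

section Aux

variable {G : Type*} [Group G]

/-- Three subgroups lemma relative to a normal subgroup. -/
lemma JF.three_subgroups {A B C N : Subgroup G} [N.Normal]
    (h1 : ⁅⁅B, C⁆, A⁆ ≤ N) (h2 : ⁅⁅C, A⁆, B⁆ ≤ N) : ⁅⁅A, B⁆, C⁆ ≤ N := by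
  set f := QuotientGroup.mk' N with hf
  have hker : f.ker = N := QuotientGroup.ker_mk' N
  have m1 : ⁅⁅B.map f, C.map f⁆, A.map f⁆ = ⊥ := by
    rw [← Subgroup.map_commutator, ← Subgroup.map_commutator]
    exact (Subgroup.map_eq_bot_iff _).mpr (h1.trans hker.ge)
  have m2 : ⁅⁅C.map f, A.map f⁆, B.map f⁆ = ⊥ := by
    rw [← Subgroup.map_commutator, ← Subgroup.map_commutator]
    exact (Subgroup.map_eq_bot_iff _).mpr (h2.trans hker.ge)
  have m3 := Subgroup.commutator_commutator_eq_bot_of_rotate m1 m2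
  rw [← Subgroup.map_commutator, ← Subgroup.map_commutator] at m3
  have := (Subgroup.map_eq_bot_iff _).mp m3
  rwa [hker] at this

lemma JF.lcs_succ (n : ℕ) :
    (⊤ : Subgroup G).lowerCentralSeries (n + 1) = ⁅(⊤ : Subgroup G).lowerCentralSeries n, (⊤ : Subgroup G)⁆ := rfl

lemma JF.lcs_characteristic (n : ℕ) : ((⊤ : Subgroup G).lowerCentralSeries n).Characteristic := by
  induction n with
  | zero =>
    rw [Subgroup.lowerCentralSeries_zero]
    infer_instance
  | succ n ih =>
    rw [JF.lcs_succ]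
    haveI := ih
    exact Subgroup.commutator_characteristic _ _

/-- `⁅L m, L n⁆ ≤ L (m + n + 1)` for the lower central series. -/
lemma JF.lcs_commutator_le : ∀ n m : ℕ,
    ⁅(⊤ : Subgroup G).lowerCentralSeries m, (⊤ : Subgroup G).lowerCentralSeries n⁆ ≤ (⊤ : Subgroup G).lowerCentralSeries (m + n + 1) := by
  intro n
  induction n with
  | zero =>
    intro m
    rw [Subgroup.lowerCentralSeries_zero, ← JF.lcs_succ]
  | succ n ih =>
    intro m
    have e : (⊤ : Subgroup G).lowerCentralSeries (n + 1) = ⁅(⊤ : Subgroup G).lowerCentralSeries n, ⊤⁆ :=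
      JF.lcs_succ n
    rw [e, Subgroup.commutator_comm]
    refine JF.three_subgroups (A := (⊤ : Subgroup G).lowerCentralSeries n) (B := ⊤)
      (C := (⊤ : Subgroup G).lowerCentralSeries m) ?_ ?_
    · rw [Subgroup.commutator_comm (⊤ : Subgroup G)]
      have h1 : ⁅(⊤ : Subgroup G).lowerCentralSeries m, (⊤ : Subgroup G)⁆ = (⊤ : Subgroup G).lowerCentralSeries (m + 1) :=
        (JF.lcs_succ m).symm
      rw [h1]
      have := ih (m + 1)
      have heq : m + 1 + n + 1 = m + (n + 1) + 1 := by omega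
      rwa [heq] at this
    · calc ⁅⁅(⊤ : Subgroup G).lowerCentralSeries m, (⊤ : Subgroup G).lowerCentralSeries n⁆, (⊤ : Subgroup G)⁆
          ≤ ⁅(⊤ : Subgroup G).lowerCentralSeries (m + n + 1), (⊤ : Subgroup G)⁆ :=
            Subgroup.commutator_mono (ih m) le_rfl
        _ = (⊤ : Subgroup G).lowerCentralSeries (m + n + 1 + 1) := (JF.lcs_succ _).symm
        _ ≤ (⊤ : Subgroup G).lowerCentralSeries (m + (n + 1) + 1) :=
            Subgroup.lowerCentralSeries_antitone _ (by omega)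

/-- Automorphisms preserve terms of the lower central series. -/
lemma JF.mem_lcs_map (h : MulAut G) {q : ℕ} {x : G} (hx : x ∈ (⊤ : Subgroup G).lowerCentralSeries q) :
    h x ∈ (⊤ : Subgroup G).lowerCentralSeries q := by
  have hchar := JF.lcs_characteristic (G := G) q
  have hfix := hchar.fixed (h : G ≃* G)
  rw [← hfix] at hx
  exact hx

/-- Commutator computation in a group: if `a` commutes with `y` and `b`, and `b`
commutes with `x`, then `⁅x*a, y*b⁆ = ⁅x, y⁆`. -/
lemma JF.comm_aux {x y a b : G} (hay : Commute a y) (hab : Commute a b)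
    (hbx : Commute b x) : ⁅x * a, y * b⁆ = ⁅x, y⁆ := by
  have h1 : a * (y * b) * a⁻¹ = y * b := by
    rw [(hay.mul_right hab).eq, mul_assoc, mul_inv_cancel, mul_one]
  have h2 : b * x⁻¹ * b⁻¹ = x⁻¹ := by
    rw [hbx.inv_right.eq, mul_assoc, mul_inv_cancel, mul_one]
  calc ⁅x * a, y * b⁆ = x * (a * (y * b) * a⁻¹) * x⁻¹ * (y * b)⁻¹ := by group
    _ = x * (y * b) * x⁻¹ * (y * b)⁻¹ := by rw [h1]
    _ = x * y * (b * x⁻¹ * b⁻¹) * y⁻¹ := by group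
    _ = x * y * x⁻¹ * y⁻¹ := by rw [h2]
    _ = ⁅x, y⁆ := by group

/-- Key lemma: if `h` moves every element by `(⊤ : Subgroup G).lowerCentralSeries k`, then it moves
elements of `(⊤ : Subgroup G).lowerCentralSeries q` by `(⊤ : Subgroup G).lowerCentralSeries (q + k)`. -/
lemma JF.key (h : MulAut G) {k : ℕ}
    (hh : ∀ g : G, g⁻¹ * h g ∈ (⊤ : Subgroup G).lowerCentralSeries k) :
    ∀ q : ℕ, ∀ x ∈ (⊤ : Subgroup G).lowerCentralSeries q, x⁻¹ * h x ∈ (⊤ : Subgroup G).lowerCentralSeries (q + k) := by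
  intro q
  induction q with
  | zero => intro x _; simpa using hh x
  | succ q ih =>
    intro x hx
    set N := (⊤ : Subgroup G).lowerCentralSeries (q + 1 + k) with hN
    haveI hNn : N.Normal := Subgroup.lowerCentralSeries_normal _ _
    have hNsucc : N = (⊤ : Subgroup G).lowerCentralSeries (q + k + 1) := by
      rw [hN, show q + 1 + k = q + k + 1 from by omega]
    set φ := QuotientGroup.mk' N with hφ
    have commN : ∀ u v : G, ⁅u, v⁆ ∈ N → Commute (φ u) (φ v) := by
      intro u v huv
      have h1 : φ ⁅u, v⁆ = 1 := by
        rw [← MonoidHom.mem_ker, hφ, QuotientGroup.ker_mk']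
        exact huv
      rw [map_commutatorElement] at h1
      exact commutatorElement_eq_one_iff_commute.mp h1
    rw [JF.lcs_succ, Subgroup.commutator_def] at hx
    refine Subgroup.closure_induction (fun z hz => ?_) (by simpa using N.one_mem)
      (fun z w _ _ ihz ihw => ?_) (fun z _ ihz => ?_) hx
    · -- generator case : z = ⁅p, s⁆ with p ∈ L q
      obtain ⟨p, hp, s, -, rfl⟩ := hz
      obtain ⟨a, haL, hpa⟩ : ∃ a, a ∈ (⊤ : Subgroup G).lowerCentralSeries (q + k) ∧ h p = p * a :=
        ⟨_, ih p hp, by group⟩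
      obtain ⟨b, hbL, hsb⟩ : ∃ b, b ∈ (⊤ : Subgroup G).lowerCentralSeries k ∧ h s = s * b :=
        ⟨_, hh s, by group⟩
      have cay : Commute (φ a) (φ s) := by
        refine commN a s ?_
        rw [hNsucc, JF.lcs_succ]
        exact Subgroup.commutator_mem_commutator haL (Subgroup.mem_top s)
      have cab : Commute (φ a) (φ b) := by
        refine commN a b ?_
        rw [hNsucc, JF.lcs_succ]
        exact Subgroup.commutator_mem_commutator haL (Subgroup.mem_top b)
      have cbp : Commute (φ b) (φ p) := by
        refine commN b p ?_
        have h1 := JF.lcs_commutator_le (G := G) q k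
          (Subgroup.commutator_mem_commutator hbL hp)
        have hle : (⊤ : Subgroup G).lowerCentralSeries (k + q + 1) ≤ N := by
          rw [hNsucc]
          exact Subgroup.lowerCentralSeries_antitone _ (by omega)
        exact hle h1
      have hq1 : φ (⁅p, s⁆⁻¹ * h ⁅p, s⁆) = 1 := by
        have e1 : h ⁅p, s⁆ = ⁅h p, h s⁆ := map_commutatorElement h p s
        rw [map_mul, map_inv, e1, hpa, hsb, map_commutatorElement, map_commutatorElement,
          map_mul, map_mul, JF.comm_aux cay cab cbp, inv_mul_cancel]
      have : ⁅p, s⁆⁻¹ * h ⁅p, s⁆ ∈ φ.ker := hq1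
      rwa [hφ, QuotientGroup.ker_mk'] at this
    · have e : (z * w)⁻¹ * h (z * w) = w⁻¹ * (z⁻¹ * h z) * w * (w⁻¹ * h w) := by
        rw [map_mul]; group
      rw [e]
      exact N.mul_mem (hNn.conj_mem' _ ihz w) ihw
    · have e : (z⁻¹)⁻¹ * h z⁻¹ = z * (z⁻¹ * h z)⁻¹ * z⁻¹ := by
        rw [map_inv]; group
      rw [e]
      exact hNn.conj_mem _ (N.inv_mem ihz) z

end Aux

section Main

variable (F : Type*) [Group F]

/-- The Johnson filtration subgroup. -/
def JF.A (k : ℕ) : Subgroup (MulAut F) where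
  carrier := {h : MulAut F | ∀ g : F, g⁻¹ * h g ∈ (⊤ : Subgroup F).lowerCentralSeries k}
  one_mem' := by intro g; simpa using ((⊤ : Subgroup F).lowerCentralSeries k).one_mem
  mul_mem' := by
    intro h₁ h₂ hh₁ hh₂ g
    have e : g⁻¹ * (h₁ * h₂) g = (g⁻¹ * h₂ g) * ((h₂ g)⁻¹ * h₁ (h₂ g)) := by
      rw [MulAut.mul_apply]; group
    rw [e]
    exact ((⊤ : Subgroup F).lowerCentralSeries k).mul_mem (hh₂ g) (hh₁ (h₂ g))
  inv_mem' := by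
    intro h hh g
    have happ : h (h⁻¹ g) = g := MulAut.apply_inv_self F h g
    have e : g⁻¹ * h⁻¹ g = ((h⁻¹ g)⁻¹ * h (h⁻¹ g))⁻¹ := by
      rw [happ]; group
    rw [e]
    exact ((⊤ : Subgroup F).lowerCentralSeries k).inv_mem (hh (h⁻¹ g))

lemma JF.A_normal (k : ℕ) : (JF.A F k).Normal := by
  constructor
  intro h hh f
  show ∀ g : F, g⁻¹ * (f * h * f⁻¹) g ∈ (⊤ : Subgroup F).lowerCentralSeries k
  intro g
  have e1 : (f * h * f⁻¹) g = f (h (f⁻¹ g)) := by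
    rw [MulAut.mul_apply, MulAut.mul_apply]
  have happ2 : f (f⁻¹ g) = g := MulAut.apply_inv_self F f g
  have e2 : f ((f⁻¹ g)⁻¹ * h (f⁻¹ g)) = g⁻¹ * f (h (f⁻¹ g)) := by
    rw [map_mul, map_inv, happ2]
  show g⁻¹ * (f * h * f⁻¹) g ∈ (⊤ : Subgroup F).lowerCentralSeries k
  rw [e1, ← e2]
  exact JF.mem_lcs_map f (hh (f⁻¹ g))

end Main

/-- For a group `F` with lower central series `F_q` (so `F_{k+1}` is
`(⊤ : Subgroup F).lowerCentralSeries k`), the automorphisms inducing the identity on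
`F/F_{k+1}` form subgroups `A k` of `Aut F`; each `A k` is normal in `A 1`
and `[A j, A k] ⊆ A (j+k)`. -/
theorem johnson_filtration_normal_and_bracket (F : Type*) [Group F] :
    ∃ A : ℕ → Subgroup (MulAut F),
      (∀ k, 1 ≤ k → (A k : Set (MulAut F)) =
        {h : MulAut F | ∀ g : F, g⁻¹ * h g ∈ (⊤ : Subgroup F).lowerCentralSeries k}) ∧
      (∀ k, 1 ≤ k → ((A k).subgroupOf (A 1)).Normal) ∧
      (∀ j k, 1 ≤ j → 1 ≤ k → ⁅A j, A k⁆ ≤ A (j + k)) := by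
  refine ⟨JF.A F, fun k _ => rfl, fun k _ => (JF.A_normal F k).subgroupOf _,
    fun j k _ _ => ?_⟩
  rw [Subgroup.commutator_le]
  intro h₁ hh₁ h₂ hh₂ g
  show g⁻¹ * ⁅h₁, h₂⁆ g ∈ (⊤ : Subgroup F).lowerCentralSeries (j + k)
  set L := (⊤ : Subgroup F).lowerCentralSeries (j + k) with hL
  have hh₁' : ∀ g : F, g⁻¹ * h₁ g ∈ (⊤ : Subgroup F).lowerCentralSeries j := hh₁
  have hh₂' : ∀ g : F, g⁻¹ * h₂ g ∈ (⊤ : Subgroup F).lowerCentralSeries k := hh₂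
  set u := h₁⁻¹ (h₂⁻¹ g) with hu
  obtain ⟨a, haL, hua⟩ : ∃ a, a ∈ (⊤ : Subgroup F).lowerCentralSeries j ∧ h₁ u = u * a :=
    ⟨_, hh₁' u, by group⟩
  obtain ⟨b, hbL, hub⟩ : ∃ b, b ∈ (⊤ : Subgroup F).lowerCentralSeries k ∧ h₂ u = u * b :=
    ⟨_, hh₂' u, by group⟩
  obtain ⟨c₁, hc₁L, hbc₁⟩ : ∃ c, c ∈ L ∧ h₁ b = b * c := by
    refine ⟨b⁻¹ * h₁ b, ?_, by group⟩
    have h1 : b⁻¹ * h₁ b ∈ (⊤ : Subgroup F).lowerCentralSeries (k + j) := JF.key h₁ hh₁' k b hbL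
    rwa [show k + j = j + k from by omega] at h1
  obtain ⟨c₂, hc₂L, hac₂⟩ : ∃ c, c ∈ L ∧ h₂ a = a * c :=
    ⟨_, JF.key h₂ hh₂' j a haL, by group⟩
  have hg : g = h₂ (h₁ u) := by rw [hu]; simp
  have hcomm : ⁅h₁, h₂⁆ g = h₁ (h₂ u) := by
    rw [commutatorElement_def, hu]
    rw [MulAut.mul_apply, MulAut.mul_apply, MulAut.mul_apply]
  have e1 : h₁ (h₂ u) = u * a * (b * c₁) := by
    rw [hub, map_mul, hua, hbc₁, mul_assoc]
  have e2 : h₂ (h₁ u) = u * b * (a * c₂) := by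
    rw [hua, map_mul, hub, hac₂, mul_assoc]
  have habL : a⁻¹ * b⁻¹ * a * b ∈ L := by
    have h1 : ⁅a⁻¹, b⁻¹⁆ ∈ ⁅(⊤ : Subgroup F).lowerCentralSeries j, (⊤ : Subgroup F).lowerCentralSeries k⁆ :=
      Subgroup.commutator_mem_commutator (((⊤ : Subgroup F).lowerCentralSeries j).inv_mem haL)
        (((⊤ : Subgroup F).lowerCentralSeries k).inv_mem hbL)
    have h2 := JF.lcs_commutator_le (G := F) k j h1
    have h3 : (⊤ : Subgroup F).lowerCentralSeries (j + k + 1) ≤ L :=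
      Subgroup.lowerCentralSeries_antitone _ (by omega)
    have := h3 h2
    rwa [commutatorElement_def, inv_inv, inv_inv] at this
  have efin : g⁻¹ * ⁅h₁, h₂⁆ g = c₂⁻¹ * (a⁻¹ * b⁻¹ * a * b) * c₁ := by
    rw [hcomm, e1]
    conv_lhs => rw [hg, e2]
    group
  rw [efin]
  exact L.mul_mem (L.mul_mem (L.inv_mem hc₂L) habL) hc₁L
end

section
/- Every symmetric g×g integer matrix B is an integer linear combination of matrices of the following two types: (1) matrices E_k^± with (k,k)-entry ±1 and all other entries 0; (2) matrices F_{kl}^± (for k ≠ l) with (k,k)- and (l,l)-entries equal to −1, (k,l)- and (l,k)-entries equal to ∓1, and all other entries 0. -/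
/-!
A symmetric matrix is its diagonal part plus `U + Uᵀ`, where `U` is its strictly upper
triangular part; hence it is an integer combination of the `single k k 1` and of the
`single k l 1 + single l k 1` with `k < l`. The first are the `E_k^+`, and
`single k l 1 + single l k 1 = -F_{kl}^+ - E_k^+ - E_l^+`.
-/

namespace Matrix

variable {n R : Type*} [DecidableEq n]

theorem add_transpose_eq_sum_single [Fintype n] [AddCommMonoid R] (U : Matrix n n R) :
    U + Uᵀ = ∑ i, ∑ j, (single i j (U i j) + single j i (U i j)) := by
  conv_lhs => rw [matrix_eq_sum_single U]
  simp only [transpose_sum, transpose_single, ← Finset.sum_add_distrib]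

variable [LinearOrder n]

def strictUpperPart [Zero R] (B : Matrix n n R) : Matrix n n R :=
  of fun i j => if i < j then B i j else 0

theorem IsSymm.eq_diagonal_add_strictUpperPart_add_transpose [AddZeroClass R]
    {B : Matrix n n R} (hB : B.IsSymm) :
    B = diagonal B.diag + (B.strictUpperPart + B.strictUpperPartᵀ) := by
  ext i j
  rcases lt_trichotomy i j with h | rfl | h
  · simp [strictUpperPart, h, h.ne, not_lt_of_gt h]
  · simp [strictUpperPart]
  · simp [strictUpperPart, h, h.ne', not_lt_of_gt h, hB.apply]

theorem IsSymm.mem_of_single_mem [Fintype n] [Semiring R] {S : Submodule R (Matrix n n R)}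
    (hdiag : ∀ k, single k k (1 : R) ∈ S)
    (hoff : ∀ k l, k < l → single k l (1 : R) + single l k 1 ∈ S)
    {B : Matrix n n R} (hB : B.IsSymm) : B ∈ S := by
  rw [hB.eq_diagonal_add_strictUpperPart_add_transpose]
  refine S.add_mem ?_ ?_
  · rw [← sum_single_eq_diagonal]
    refine S.sum_mem fun k _ => ?_
    simpa using S.smul_mem (B k k) (hdiag k)
  · rw [add_transpose_eq_sum_single]
    refine S.sum_mem fun i _ => S.sum_mem fun j _ => ?_
    by_cases hij : i < j
    · simpa [strictUpperPart, hij] using S.smul_mem (B i j) (hoff i j hij)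
    · simp [strictUpperPart, hij]

end Matrix

/-- The matrices `E_k^±` and `F_{kl}^±`. -/
def twistMatrices (g : ℕ) : Set (Matrix (Fin g) (Fin g) ℤ) :=
  {A | ∃ (k : Fin g) (ε : ℤ), (ε = 1 ∨ ε = -1) ∧ A = Matrix.single k k ε} ∪
    {A | ∃ (k l : Fin g) (ε : ℤ), k ≠ l ∧ (ε = 1 ∨ ε = -1) ∧
      A = -(Matrix.single k k (1 : ℤ)) - Matrix.single l l 1
        - (Matrix.single k l ε + Matrix.single l k ε)}

theorem single_mem_span_twistMatrices (g : ℕ) (k : Fin g) :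
    Matrix.single k k 1 ∈ Submodule.span ℤ (twistMatrices g) :=
  Submodule.subset_span (Or.inl ⟨k, 1, Or.inl rfl, rfl⟩)

theorem single_add_single_mem_span_twistMatrices {g : ℕ} {k l : Fin g} (hkl : k ≠ l) :
    Matrix.single k l 1 + Matrix.single l k 1 ∈ Submodule.span ℤ (twistMatrices g) := by
  set S := Submodule.span ℤ (twistMatrices g)
  have hF : -(Matrix.single k k (1 : ℤ)) - Matrix.single l l 1
      - (Matrix.single k l 1 + Matrix.single l k 1) ∈ S :=
    Submodule.subset_span (Or.inr ⟨k, l, 1, hkl, Or.inl rfl, rfl⟩)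
  convert S.sub_mem (S.sub_mem (S.neg_mem hF) (single_mem_span_twistMatrices g k))
    (single_mem_span_twistMatrices g l) using 1
  abel

/-- Every symmetric `g × g` integer matrix is an integer linear combination of
(1) matrices `E_k^±` with `(k,k)`-entry `±1` and all other entries `0`, and
(2) matrices `F_{kl}^±` (`k ≠ l`) with `(k,k)`- and `(l,l)`-entries `−1`,
`(k,l)`- and `(l,k)`-entries `∓1`, and all other entries `0`. -/
theorem symmetric_matrix_spanned_by_twist_matrices (g : ℕ)
    (B : Matrix (Fin g) (Fin g) ℤ) (hB : B.IsSymm) :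
    B ∈ Submodule.span ℤ
      ({A | ∃ (k : Fin g) (ε : ℤ), (ε = 1 ∨ ε = -1) ∧
          A = Matrix.single k k ε} ∪
       {A | ∃ (k l : Fin g) (ε : ℤ), k ≠ l ∧ (ε = 1 ∨ ε = -1) ∧
          A = -(Matrix.single k k (1 : ℤ)) - Matrix.single l l 1
              - (Matrix.single k l ε + Matrix.single l k ε)} :
        Set (Matrix (Fin g) (Fin g) ℤ)) :=
  hB.mem_of_single_mem (single_mem_span_twistMatrices g)
    fun k l hkl => single_add_single_mem_span_twistMatrices hkl.ne
end
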